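/- Let S = X*P be a dense birecurrent set of finite type with left root X and P the associated set of proper prefixes of X. Then for any positive Bernoulli distribution π on A*, the average length of X satisfies λ(X) = i(S)·π(P). -/

import Mathlib

namespace Birec

variable {A : Type*}

/-- The left quotient `u⁻¹S = {v | u v ∈ S}`. -/
def leftQuot (S : Set (List A)) (u : List A) : Set (List A) := {v | u ++ v ∈ S}

/-- A language is recognizable iff it has finitely many left quotients (Nerode). -/
def Recognizable (S : Set (List A)) : Prop := (Set.range (leftQuot S)).Finite

/-- The reversal `S̃` of a language. -/
def langRev (S : Set (List A)) : Set (List A) := {w | w.reverse ∈ S}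

/-- A recognizable set is recurrent if its minimal automaton (whose states are the
nonempty left quotients) is strongly connected. -/
def Recurrent (S : Set (List A)) : Prop :=
  Recognizable S ∧
    ∀ u v : List A, (leftQuot S u).Nonempty → (leftQuot S v).Nonempty →
      ∃ w : List A, leftQuot S (u ++ w) = leftQuot S v

/-- A set is birecurrent if it is recurrent together with its reversal. -/
def Birecurrent (S : Set (List A)) : Prop := Recurrent S ∧ Recurrent (langRev S)

/-- A set is dense if every word is a factor of one of its words. -/
def LangDense (S : Set (List A)) : Prop := ∀ v : List A, ∃ u w : List A, u ++ v ++ w ∈ S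

end Birec
namespace Birec

variable {A : Type*}

/-- A prefix code: a set of nonempty words, none of which is a proper prefix of another. -/
def IsPrefixCode (X : Set (List A)) : Prop :=
  [] ∉ X ∧ ∀ x ∈ X, ∀ y ∈ X, x <+: y → x = y

/-- A suffix code: a set of nonempty words, none of which is a proper suffix of another. -/
def IsSuffixCode (X : Set (List A)) : Prop :=
  [] ∉ X ∧ ∀ x ∈ X, ∀ y ∈ X, x <:+ y → x = y

/-- A bifix code is both prefix and suffix. -/
def IsBifixCode (X : Set (List A)) : Prop := IsPrefixCode X ∧ IsSuffixCode X

/-- A code: every word has at most one factorization into words of `X`. -/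
def IsCode (X : Set (List A)) : Prop :=
  [] ∉ X ∧ ∀ l m : List (List A), (∀ x ∈ l, x ∈ X) → (∀ x ∈ m, x ∈ X) →
    l.flatten = m.flatten → l = m

/-- The submonoid `X*` generated by a set of words. -/
def star (X : Set (List A)) : Set (List A) :=
  {w | ∃ l : List (List A), (∀ x ∈ l, x ∈ X) ∧ l.flatten = w}

/-- Product of two languages. -/
def setMul (X Y : Set (List A)) : Set (List A) := {w | ∃ x ∈ X, ∃ y ∈ Y, w = x ++ y}

/-- The proper prefixes of words of `X`. -/
def properPrefixes (X : Set (List A)) : Set (List A) := {p | ∃ x ∈ X, p <+: x ∧ p ≠ x}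

/-- The proper suffixes of words of `X`. -/
def properSuffixes (X : Set (List A)) : Set (List A) := {p | ∃ x ∈ X, p <:+ x ∧ p ≠ x}

def IsMaximalPrefixCode (X : Set (List A)) : Prop :=
  IsPrefixCode X ∧ ∀ Y : Set (List A), IsPrefixCode Y → X ⊆ Y → Y = X

def IsMaximalSuffixCode (X : Set (List A)) : Prop :=
  IsSuffixCode X ∧ ∀ Y : Set (List A), IsSuffixCode Y → X ⊆ Y → Y = X

def IsMaximalBifixCode (X : Set (List A)) : Prop :=
  IsBifixCode X ∧ ∀ Y : Set (List A), IsBifixCode Y → X ⊆ Y → Y = X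

def IsMaximalCode (X : Set (List A)) : Prop :=
  IsCode X ∧ ∀ Y : Set (List A), IsCode Y → X ⊆ Y → Y = X

end Birec
namespace Birec

variable {A : Type*}

/-- The stabilizer of the initial state of the minimal automaton of `S`:
the submonoid recognized by `(Q, i, i)`. -/
def stab (S : Set (List A)) : Set (List A) := {w | leftQuot S w = S}

/-- The left root of a recurrent set: the prefix code generating the submonoid
recognized by the minimal automaton with the initial state as unique terminal state,
i.e. the minimal generating set of that submonoid. -/
def leftRoot (S : Set (List A)) : Set (List A) :=
  {w | w ∈ stab S ∧ w ≠ [] ∧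
    ¬∃ u v : List A, u ∈ stab S ∧ v ∈ stab S ∧ u ≠ [] ∧ v ≠ [] ∧ w = u ++ v}

/-- The right root of a birecurrent set: the reversal of the left root of the reversal. -/
def rightRoot (S : Set (List A)) : Set (List A) := langRev (leftRoot (langRev S))

/-- A birecurrent set is of finite type if its left and right roots are finite. -/
def FiniteType (S : Set (List A)) : Prop := (leftRoot S).Finite ∧ (rightRoot S).Finite

end Birec
namespace Birec

variable {A : Type*}

/-- The states of the minimal automaton of `S`: the nonempty left quotients. -/
def MinStates (S : Set (List A)) : Set (Set (List A)) :=
  {q | q.Nonempty ∧ ∃ u : List A, q = leftQuot S u}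

/-- The terminal states of the minimal automaton of `S`. -/
def TerminalStates (S : Set (List A)) : Set (Set (List A)) :=
  {q | q ∈ MinStates S ∧ [] ∈ q}

/-- The rank of a word in the minimal automaton of `S`: the number of states in the
image of the (partial) map induced by `w` on the states. -/
noncomputable def mrank (S : Set (List A)) (w : List A) : ℕ :=
  {T : Set (List A) | T.Nonempty ∧ ∃ u : List A, T = leftQuot S (u ++ w)}.ncard

/-- `w` is a word of minimal nonzero rank in the minimal automaton of `S`. -/
def IsMinNonzeroMrank (S : Set (List A)) (w : List A) : Prop :=
  mrank S w ≠ 0 ∧ ∀ v : List A, mrank S v ≠ 0 → mrank S w ≤ mrank S v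

/-- The set of terminal states is saturated by `w`: it is a union of classes of
the kernel of `w` (in particular it is contained in the domain of `w`). -/
def SaturatedBy (S : Set (List A)) (w : List A) : Prop :=
  (∀ q ∈ TerminalStates S, (leftQuot q w).Nonempty) ∧
    ∀ p q : Set (List A), p ∈ MinStates S → q ∈ MinStates S →
      (leftQuot p w).Nonempty → (leftQuot q w).Nonempty →
      leftQuot p w = leftQuot q w → ([] ∈ p ↔ [] ∈ q)

/-- The degree of `S`: the minimal nonzero rank of a word in its minimal automaton. -/
noncomputable def langDegree (S : Set (List A)) : ℕ :=
  sInf {n : ℕ | n ≠ 0 ∧ ∃ w : List A, mrank S w = n}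

end Birec

/-!
The left root `X` is a finite maximal prefix code, so summing over the tree of its proper
prefixes `Q` gives `π(X) = 1` and `λ(X) = π(Q)`. The minimal automaton of `S` is complete
(by density and recurrence), and pushing `π` restricted to `Q` forward along `q ↦ i·q` gives a
stationary measure of the Markov chain reading the letter `a` with probability `π(a)`:
stationarity is again the tree summation, since the words of `X` return to `i`. Its total
mass is `π(Q)` and its mass on the terminal states is `π(P)`.

A second stationary measure is `∑ ν(I) 𝟙_I`, for a stationary distribution `ν` of the chain
on the images of words of minimal rank `d`, on which every letter acts injectively. It has
total mass `d` and, by saturation, mass `k` on the terminal states. Since the chain is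
irreducible and `π > 0`, the two measures are proportional, whence `π(Q) = (d / k) π(P)`.
-/

open Finset Matrix

theorem Matrix.exists_vecMul_eq_self_of_mem_rowStochastic {n : Type*} [Fintype n]
    [DecidableEq n] [Nonempty n] {M : Matrix n n ℝ} (hM : M ∈ rowStochastic ℝ n) :
    ∃ μ : n → ℝ, (∀ i, 0 ≤ μ i) ∧ ∑ i, μ i = 1 ∧ μ ᵥ* M = μ := by
  have hdet : (M - 1).det = 0 := exists_mulVec_eq_zero_iff.mp
    ⟨1, one_ne_zero, by
      rw [sub_mulVec, one_vecMul_of_mem_rowStochastic hM, one_mulVec, sub_self]⟩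
  obtain ⟨x, hx0, hx⟩ := exists_vecMul_eq_zero_iff.mpr hdet
  rw [vecMul_sub, vecMul_one, sub_eq_zero] at hx
  set y : n → ℝ := fun i => |x i|
  -- `|x|` lies pointwise below `|x| ᵥ* M`, and both have the same total mass.
  have hle : ∀ j ∈ univ, y j ≤ (y ᵥ* M) j := fun j _ => by
    calc y j = |(x ᵥ* M) j| := by rw [hx]
      _ ≤ ∑ i, |x i * M i j| := abs_sum_le_sum_abs _ _
      _ = (y ᵥ* M) j := sum_congr rfl fun i _ => by
          rw [abs_mul, abs_of_nonneg (nonneg_of_mem_rowStochastic hM)]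
  have hmass : ∑ j, (y ᵥ* M) j = ∑ j, y j := by
    have := dotProduct_mulVec y M 1
    rw [one_vecMul_of_mem_rowStochastic hM] at this
    simpa [dotProduct] using this.symm
  have hyM : y ᵥ* M = y := funext fun j =>
    ((sum_eq_sum_iff_of_le hle).mp hmass.symm j (mem_univ j)).symm
  have hpos : 0 < ∑ i, y i := by
    obtain ⟨i, hi⟩ := Function.ne_iff.mp hx0
    exact (abs_pos.mpr hi).trans_le (single_le_sum (fun j _ => abs_nonneg (x j)) (mem_univ i))
  refine ⟨(∑ i, y i)⁻¹ • y, fun i => mul_nonneg (inv_nonneg.mpr hpos.le) (abs_nonneg _), ?_,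
    by rw [smul_vecMul, hyM]⟩
  simp [← mul_sum, inv_mul_cancel₀ hpos.ne']

namespace Birec

theorem prod_map_pos {A : Type*} {p : A → ℝ} (hp : ∀ a, 0 < p a) (u : List A) :
    0 < (u.map p).prod :=
  List.prod_pos fun _ h => by obtain ⟨a, -, rfl⟩ := List.mem_map.mp h; exact hp a

theorem prod_map_nonneg {A : Type*} {p : A → ℝ} (hp : ∀ a, 0 ≤ p a) (u : List A) :
    0 ≤ (u.map p).prod :=
  List.prod_nonneg fun _ h => by obtain ⟨a, -, rfl⟩ := List.mem_map.mp h; exact hp a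

theorem tsum_subtype_eq_sum {α : Type*} {s : Set α} {F : Finset α} (h : (F : Set α) = s)
    (f : α → ℝ) : ∑' x : s, f x = ∑ x ∈ F, f x := by
  subst h
  exact Finset.tsum_subtype' F f

section Stationary

variable {A σ : Type*} [Fintype A] [Fintype σ] {p : A → ℝ} {δ : σ → A → σ}

/-- Stationarity `x M = x` of the Markov chain moving from `q` to `δ q a` with probability
`p a`, in dual form: tested against every function `g` on the states. -/
def IsStationary (p : A → ℝ) (δ : σ → A → σ) (x : σ → ℝ) : Prop :=
  ∀ g : σ → ℝ, ∑ q, x q * ∑ a, p a * g (δ q a) = ∑ q, x q * g q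

namespace IsStationary

theorem sub_mul {x y : σ → ℝ} (hx : IsStationary p δ x) (hy : IsStationary p δ y) (c : ℝ) :
    IsStationary p δ (fun q => y q - c * x q) := fun g => by
  simp only [_root_.sub_mul, sum_sub_distrib, mul_assoc, ← mul_sum, hx g, hy g]

theorem mul_le_apply_step {x : σ → ℝ} (hx : IsStationary p δ x)
    (hp : ∀ a, 0 ≤ p a) (hx0 : ∀ q, 0 ≤ x q) (q : σ) (a : A) : p a * x q ≤ x (δ q a) := by
  classical
  have key := hx fun r => if r = δ q a then 1 else 0
  simp only [mul_ite, mul_one, mul_zero, sum_ite_eq', mem_univ, if_true] at key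
  rw [← key]
  have hterm : ∀ r b, 0 ≤ x r * if δ r b = δ q a then p b else 0 := fun r b => by
    split_ifs <;> simp [hx0 r, hp b, mul_nonneg]
  calc p a * x q = x q * if δ q a = δ q a then p a else 0 := by simp [mul_comm]
    _ ≤ ∑ b, x q * if δ q b = δ q a then p b else 0 :=
        single_le_sum (fun b _ => hterm q b) (mem_univ a)
    _ ≤ ∑ r, ∑ b, x r * if δ r b = δ q a then p b else 0 :=
        single_le_sum (f := fun r => ∑ b, x r * if δ r b = δ q a then p b else 0)
          (fun r _ => sum_nonneg fun b _ => hterm r b) (mem_univ q)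
    _ = ∑ r, x r * ∑ b, if δ r b = δ q a then p b else 0 := by simp only [mul_sum]

theorem prod_mul_le_apply_foldl {x : σ → ℝ} (hx : IsStationary p δ x)
    (hp : ∀ a, 0 ≤ p a) (hx0 : ∀ q, 0 ≤ x q) (u : List A) (q : σ) :
    (u.map p).prod * x q ≤ x (u.foldl δ q) := by
  induction u generalizing q with
  | nil => simp
  | cons a u ih =>
    calc ((a :: u).map p).prod * x q = (u.map p).prod * (p a * x q) := by simp; ring
      _ ≤ (u.map p).prod * x (δ q a) :=
          mul_le_mul_of_nonneg_left (hx.mul_le_apply_step hp hx0 q a) (prod_map_nonneg hp u)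
      _ ≤ x ((a :: u).foldl δ q) := ih (δ q a)

theorem pos {x : σ → ℝ} (hx : IsStationary p δ x) (hp : ∀ a, 0 < p a)
    (hconn : ∀ q q', ∃ u : List A, u.foldl δ q = q') (hx0 : ∀ q, 0 ≤ x q) {q₀ : σ}
    (hq₀ : 0 < x q₀) (q : σ) : 0 < x q := by
  obtain ⟨u, rfl⟩ := hconn q₀ q
  exact (mul_pos (prod_map_pos hp u) hq₀).trans_le
    (hx.prod_mul_le_apply_foldl (fun a => (hp a).le) hx0 u q₀)

/-- At a state minimising `y / x`, the nonnegative stationary measure `y - c x` vanishes;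
by irreducibility it then vanishes everywhere. -/
theorem exists_eq_mul {x y : σ → ℝ} (hx : IsStationary p δ x) (hy : IsStationary p δ y)
    (hp : ∀ a, 0 < p a) (hconn : ∀ q q', ∃ u : List A, u.foldl δ q = q')
    (hxpos : ∀ q, 0 < x q) : ∃ c : ℝ, ∀ q, y q = c * x q := by
  cases isEmpty_or_nonempty σ
  · exact ⟨0, isEmptyElim⟩
  obtain ⟨q₀, hq₀⟩ := Finite.exists_min fun q => y q / x q
  refine ⟨y q₀ / x q₀, fun q => ?_⟩
  have hz0 : ∀ q, 0 ≤ y q - y q₀ / x q₀ * x q := fun q =>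
    sub_nonneg.mpr ((le_div_iff₀ (hxpos q)).mp (hq₀ q))
  have hzq₀ : y q₀ - y q₀ / x q₀ * x q₀ = 0 := by
    rw [div_mul_cancel₀ _ (hxpos q₀).ne', sub_self]
  obtain ⟨u, hu⟩ := hconn q q₀
  have := (hx.sub_mul hy _).prod_mul_le_apply_foldl (fun a => (hp a).le) hz0 u q
  rw [hu, hzq₀] at this
  have := nonpos_of_mul_nonpos_right this (prod_map_pos hp u)
  linarith [hz0 q]

end IsStationary

theorem exists_isStationary [Nonempty σ] [DecidableEq σ] (hp : ∀ a, 0 ≤ p a)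
    (hsum : ∑ a, p a = 1) (δ : σ → A → σ) :
    ∃ x : σ → ℝ, (∀ q, 0 ≤ x q) ∧ ∑ q, x q = 1 ∧ IsStationary p δ x := by
  let M : Matrix σ σ ℝ := fun q q' => ∑ a, if δ q a = q' then p a else 0
  have hM : M ∈ rowStochastic ℝ σ := mem_rowStochastic_iff_sum.mpr
    ⟨fun q q' => sum_nonneg fun a _ => by split_ifs <;> simp [hp a],
      fun q => by simp only [M]; rw [sum_comm]; simp [hsum]⟩
  obtain ⟨x, hx0, hx1, hxM⟩ := exists_vecMul_eq_self_of_mem_rowStochastic hM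
  refine ⟨x, hx0, hx1, fun g => ?_⟩
  have hrow : ∀ q, ∑ q', M q q' * g q' = ∑ a, p a * g (δ q a) := fun q => by
    simp only [M, sum_mul, ite_mul, zero_mul]
    rw [sum_comm]
    simp
  calc ∑ q, x q * ∑ a, p a * g (δ q a) = ∑ q', (x ᵥ* M) q' * g q' := by
        simp only [← hrow, vecMul, dotProduct, mul_sum, sum_mul, mul_assoc]
        exact sum_comm
    _ = ∑ q, x q * g q := by rw [hxM]

end Stationary

section Images

variable {A σ : Type*} [Fintype σ] [DecidableEq σ] (δ : σ → A → σ)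

/-- `(imageBy δ u).card` is the rank of `u`. -/
def imageBy (u : List A) : Finset σ := univ.image fun q => u.foldl δ q

def IsMinImage (I : Finset σ) : Prop :=
  ∃ u : List A, I = imageBy δ u ∧ ∀ v : List A, I.card ≤ (imageBy δ v).card

variable {δ}

theorem imageBy_append (u v : List A) :
    imageBy δ (u ++ v) = (imageBy δ u).image fun q => v.foldl δ q := by
  simp [imageBy, image_image, Function.comp_def, List.foldl_append]

namespace IsMinImage

variable {I J : Finset σ}

theorem card_image (hI : IsMinImage δ I) (v : List A) :
    (I.image fun q => v.foldl δ q).card = I.card := by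
  obtain ⟨u, rfl, hmin⟩ := hI
  have h := hmin (u ++ v)
  rw [imageBy_append] at h
  exact card_image_le.antisymm h

theorem injOn (hI : IsMinImage δ I) (v : List A) : Set.InjOn (fun q => v.foldl δ q) I :=
  injOn_of_card_image_eq (hI.card_image v)

theorem image (hI : IsMinImage δ I) (v : List A) :
    IsMinImage δ (I.image fun q => v.foldl δ q) := by
  obtain ⟨u, rfl, hmin⟩ := hI
  refine ⟨u ++ v, (imageBy_append u v).symm, fun w => ?_⟩
  rw [card_image ⟨u, rfl, hmin⟩ v]
  exact hmin w

theorem card_eq (hI : IsMinImage δ I) (hJ : IsMinImage δ J) : I.card = J.card := by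
  obtain ⟨u, rfl, hu⟩ := hI
  obtain ⟨v, rfl, hv⟩ := hJ
  exact (hu v).antisymm (hv u)

theorem image_eq_imageBy {w : List A} (hI : IsMinImage δ I) (hw : IsMinImage δ (imageBy δ w)) :
    (I.image fun q => w.foldl δ q) = imageBy δ w :=
  eq_of_subset_of_card_le (image_subset_image (subset_univ I))
    ((hw.card_eq hI).trans (hI.card_image w).symm).le

theorem card_filter {t : σ → Prop} [DecidablePred t] {w : List A} (hI : IsMinImage δ I)
    (hw : IsMinImage δ (imageBy δ w))
    (hsat : ∀ q q', w.foldl δ q = w.foldl δ q' → (t q ↔ t q')) :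
    (I.filter t).card = ((univ.filter t).image fun q => w.foldl δ q).card := by
  rw [← card_image_of_injOn ((hI.injOn w).mono (filter_subset t I))]
  congr 1
  ext y
  simp only [mem_image, mem_filter, mem_univ, true_and]
  constructor
  · rintro ⟨q, ⟨-, hq⟩, rfl⟩
    exact ⟨q, hq, rfl⟩
  · rintro ⟨q, hq, rfl⟩
    have : w.foldl δ q ∈ I.image fun q => w.foldl δ q := by
      rw [hI.image_eq_imageBy hw]; exact mem_image_of_mem _ (mem_univ q)
    obtain ⟨q', hq'I, hq'⟩ := mem_image.mp this
    exact ⟨q', ⟨hq'I, (hsat q' q hq').mpr hq⟩, hq'⟩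

end IsMinImage

end Images

theorem exists_foldl_eq_of_absorbing {A σ : Type*} [Finite σ] {δ : σ → A → σ} {z : σ}
    (hz : ∀ a, δ z a = z) (hreach : ∀ q, ∃ u : List A, u.foldl δ q = z) :
    ∃ u : List A, ∀ q, u.foldl δ q = z := by
  classical
  cases nonempty_fintype σ
  suffices ∀ s : Finset σ, ∃ u : List A, ∀ q ∈ s, u.foldl δ q = z by
    obtain ⟨u, hu⟩ := this univ
    exact ⟨u, fun q => hu q (mem_univ q)⟩
  intro s
  induction s using Finset.induction_on with
  | empty => exact ⟨[], by simp⟩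
  | insert q s _ ih =>
    obtain ⟨u, hu⟩ := ih
    obtain ⟨v, hv⟩ := hreach (u.foldl δ q)
    refine ⟨u ++ v, fun r hr => ?_⟩
    rw [List.foldl_append]
    rcases mem_insert.mp hr with rfl | hr
    · exact hv
    · rw [hu r hr]
      exact List.foldl_fixed' hz v

section Index

variable {A σ τ : Type*} [Fintype A] [Fintype σ] [DecidableEq σ] [Fintype τ] {p : A → ℝ}
  {δ : σ → A → σ}

def mixIndicator (ν : τ → ℝ) (F : τ → Finset σ) (q : σ) : ℝ :=
  ∑ I, ν I * if q ∈ F I then 1 else 0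

theorem sum_mixIndicator_mul (ν : τ → ℝ) (F : τ → Finset σ) (g : σ → ℝ) :
    ∑ q, mixIndicator ν F q * g q = ∑ I, ν I * ∑ q ∈ F I, g q := by
  simp only [mixIndicator, sum_mul, mul_assoc, ite_mul, one_mul, zero_mul]
  rw [sum_comm]
  simp [← mul_sum, sum_ite_mem]

theorem isStationary_mixIndicator {ν : τ → ℝ} {F : τ → Finset σ}
    (δ' : τ → A → τ) (hν : IsStationary p δ' ν)
    (hF : ∀ I a, F (δ' I a) = (F I).image fun q => δ q a)
    (hinj : ∀ I a, Set.InjOn (fun q => δ q a) (F I)) :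
    IsStationary p δ (mixIndicator ν F) := fun g => by
  rw [sum_mixIndicator_mul, sum_mixIndicator_mul, ← hν fun I => ∑ q ∈ F I, g q]
  refine sum_congr rfl fun I _ => ?_
  rw [sum_comm]
  simp only [← mul_sum, hF, sum_image (hinj I _)]

/-- Compare `x` with the measure spreading a stationary distribution of the chain of minimal
images uniformly over each image: they are proportional, and the latter has mass `d` in total
and `k` on `t`. -/
theorem IsStationary.sum_filter_mul_card_imageBy {x : σ → ℝ} (hx : IsStationary p δ x)
    (hxpos : ∀ q, 0 < x q) (hp : ∀ a, 0 < p a) (hsum : ∑ a, p a = 1)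
    (hconn : ∀ q q', ∃ u : List A, u.foldl δ q = q') {t : σ → Prop} [DecidablePred t]
    {w : List A} (hw : IsMinImage δ (imageBy δ w))
    (hsat : ∀ q q', w.foldl δ q = w.foldl δ q' → (t q ↔ t q')) :
    (∑ q with t q, x q) * (imageBy δ w).card =
      ((univ.filter t).image fun q => w.foldl δ q).card * ∑ q, x q := by
  classical
  let step (I : {I // IsMinImage δ I}) (a : A) : {I // IsMinImage δ I} :=
    ⟨I.1.image fun q => δ q a, by simpa using I.2.image [a]⟩
  have : Nonempty {I // IsMinImage δ I} := ⟨⟨_, hw⟩⟩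
  obtain ⟨ν, -, hν1, hν⟩ := exists_isStationary (fun a => (hp a).le) hsum step
  have hy : IsStationary p δ (mixIndicator ν Subtype.val) :=
    isStationary_mixIndicator step hν (fun _ _ => rfl) fun I a => by simpa using I.2.injOn [a]
  obtain ⟨c, hc⟩ := hx.exists_eq_mul hy hp hconn hxpos
  have hmass : ∀ g : σ → ℝ, ∑ I : {I // IsMinImage δ I}, ν I * ∑ q ∈ I.1, g q =
      c * ∑ q, x q * g q := fun g => by
    rw [← sum_mixIndicator_mul, mul_sum]
    simp only [hc, mul_assoc]
  have hcard (I : {I // IsMinImage δ I}) : I.1.card = (imageBy δ w).card := I.2.card_eq hw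
  have hcard_filter (I : {I // IsMinImage δ I}) := I.2.card_filter hw hsat
  have hd := hmass 1
  have hk := hmass fun q => if t q then 1 else 0
  simp only [Pi.one_apply, sum_const, nsmul_eq_mul, mul_one, mul_ite, mul_zero, ← sum_filter,
    hcard, hcard_filter, ← sum_mul, hν1, one_mul] at hd hk
  rw [hd, hk]
  ring

end Index

section PrefixCode

variable {A : Type*} {S X : Set (List A)}

theorem properPrefixes_finite (hX : X.Finite) : (properPrefixes X).Finite :=
  (hX.biUnion fun x _ => x.inits.finite_toSet).subset fun q ⟨x, hx, hqx, _⟩ =>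
    Set.mem_biUnion hx ((List.mem_inits q x).mpr hqx)

theorem notMem_of_mem_properPrefixes (hX : IsPrefixCode X) {q : List A}
    (hq : q ∈ properPrefixes X) : q ∉ X := fun hqX => by
  obtain ⟨x, hx, hqx, hne⟩ := hq
  exact hne (hX.2 q hqX x hx hqx)

theorem nil_mem_properPrefixes (hX : IsPrefixCode X) (hne : X.Nonempty) :
    [] ∈ properPrefixes X := by
  obtain ⟨x, hx⟩ := hne
  exact ⟨x, hx, List.nil_prefix, fun h => hX.1 (h ▸ hx)⟩

theorem dropLast_mem_properPrefixes {r : List A} (hr : r ∈ properPrefixes X ∪ X)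
    (hne : r ≠ []) : r.dropLast ∈ properPrefixes X := by
  have hlt : r.dropLast.length < r.length := by
    rw [List.length_dropLast]; exact Nat.sub_lt (List.length_pos_iff.mpr hne) one_pos
  rcases hr with ⟨x, hx, hrx, -⟩ | hr
  · exact ⟨x, hx, r.dropLast_prefix.trans hrx, fun h => by
      have := hrx.length_le; rw [← h] at this; omega⟩
  · exact ⟨r, hr, r.dropLast_prefix, fun h => by rw [h] at hlt; omega⟩

theorem append_singleton_mem_properPrefixes_union (hX : IsPrefixCode X)
    (hcompl : ∀ u, ∃ v, u ++ v ∈ star X) {q : List A} (hq : q ∈ properPrefixes X) (a : A) :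
    q ++ [a] ∈ properPrefixes X ∪ X := by
  obtain ⟨x', hx', hqx', hne'⟩ := hq
  -- Compare `q a` with the first factor `x` of a word `q a v ∈ X*`: were `x` shorter, it would
  -- be a prefix of `q`, hence a proper prefix of the code word `x'`.
  obtain ⟨v, l, hl, hlv⟩ := hcompl (q ++ [a])
  match l, hl, hlv with
  | [], _, hlv => simp at hlv
  | x :: l, hl, hlv =>
    have hx : x ∈ X := hl x List.mem_cons_self
    have hpre : q ++ [a] <+: x ++ (l.flatten) := by
      rw [← List.flatten_cons, hlv]; exact List.prefix_append _ _
    by_cases hlen : (q ++ [a]).length ≤ x.length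
    · have hqa : q ++ [a] <+: x :=
        List.prefix_of_prefix_length_le hpre (List.prefix_append _ _) hlen
      by_cases heq : q ++ [a] = x
      · exact Or.inr (heq ▸ hx)
      · exact Or.inl ⟨x, hx, hqa, heq⟩
    · exfalso
      have hlen' : x.length ≤ q.length := by simp at hlen; omega
      have hxq : x <+: q := List.prefix_of_prefix_length_le
        (List.prefix_of_prefix_length_le (List.prefix_append _ _) hpre (by simp; omega))
        (List.prefix_append q [a]) hlen'
      have hxx' := hX.2 x hx x' hx' (hxq.trans hqx')
      subst hxx'
      exact hne' (hqx'.eq_of_length (le_antisymm hqx'.length_le hlen'))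

theorem nonempty_of_subset_setMul (hS : S ⊆ setMul (star X) (properPrefixes X))
    (hne : S.Nonempty) : X.Nonempty := by
  obtain ⟨s, hs⟩ := hne
  obtain ⟨-, -, q, ⟨x, hx, -⟩, -⟩ := hS hs
  exact ⟨x, hx⟩

theorem exists_append_mem_star_of_subset (hS : S ⊆ setMul (star X) (properPrefixes X))
    (hcomp : ∀ u, (leftQuot S u).Nonempty) (u : List A) : ∃ v, u ++ v ∈ star X := by
  obtain ⟨y, hy⟩ := hcomp u
  obtain ⟨_, ⟨l, hl, rfl⟩, q, ⟨x, hx, ⟨t, rfl⟩, -⟩, huy⟩ := hS hy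
  refine ⟨y ++ t, l ++ [q ++ t], fun z hz => ?_, ?_⟩
  · rcases List.mem_append.mp hz with hz | hz
    · exact hl z hz
    · rw [List.mem_singleton.mp hz]; exact hx
  · rw [List.flatten_append, List.flatten_singleton, ← List.append_assoc, ← List.append_assoc,
      huy]

end PrefixCode

section Tree

variable {A : Type*}

/-- `Q` is the set of internal nodes and `X` the set of leaves of a complete finite tree
of words: `X` is a finite maximal prefix code with proper prefixes `Q`. -/
structure IsCompletePrefixTree (X Q : Finset (List A)) : Prop where
  coe_eq : (Q : Set (List A)) = properPrefixes X
  isPrefixCode : IsPrefixCode (X : Set (List A))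
  nonempty : X.Nonempty
  append_mem : ∀ q ∈ Q, ∀ a, q ++ [a] ∈ Q ∨ q ++ [a] ∈ X

namespace IsCompletePrefixTree

variable {X Q : Finset (List A)}

theorem mem_iff (hT : IsCompletePrefixTree X Q) {q : List A} : q ∈ Q ↔ q ∈ properPrefixes X := by
  rw [← hT.coe_eq, mem_coe]

theorem nil_mem (hT : IsCompletePrefixTree X Q) : [] ∈ Q :=
  hT.mem_iff.mpr (nil_mem_properPrefixes hT.isPrefixCode (by exact_mod_cast hT.nonempty))

theorem disjoint (hT : IsCompletePrefixTree X Q) : Disjoint Q X :=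
  disjoint_left.mpr fun _ hq => notMem_of_mem_properPrefixes hT.isPrefixCode (hT.mem_iff.mp hq)

theorem image_append_singleton [DecidableEq A] [Fintype A] (hT : IsCompletePrefixTree X Q) :
    (Q ×ˢ univ).image (fun qa : List A × A => qa.1 ++ [qa.2]) = (Q ∪ X).erase [] := by
  ext r
  simp only [mem_image, mem_product, mem_univ, and_true, mem_erase, Prod.exists]
  constructor
  · rintro ⟨q, a, hq, rfl⟩
    exact ⟨by simp, mem_union.mpr (hT.append_mem q hq a)⟩
  · rintro ⟨hne, hr⟩
    obtain ⟨q, a, rfl⟩ := (List.eq_nil_or_concat' r).resolve_left hne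
    have hr' : q ++ [a] ∈ properPrefixes X ∪ X := by
      rcases mem_union.mp hr with h | h
      · exact Or.inl (hT.mem_iff.mp h)
      · exact Or.inr h
    have := dropLast_mem_properPrefixes hr' hne
    rw [List.dropLast_concat] at this
    exact ⟨q, a, hT.mem_iff.mpr this, rfl⟩

variable [Fintype A] (p : A → ℝ)

/-- The children `q a` of the internal nodes `q` are exactly the nodes other than the
root. -/
theorem sum_children (hT : IsCompletePrefixTree X Q) (g : List A → ℝ) :
    ∑ q ∈ Q, (q.map p).prod * ∑ a, p a * g (q ++ [a]) + g [] =
      ∑ q ∈ Q, (q.map p).prod * g q + ∑ x ∈ X, (x.map p).prod * g x := by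
  classical
  have hinj : Set.InjOn (fun qa : List A × A => qa.1 ++ [qa.2]) ↑(Q ×ˢ (univ : Finset A)) :=
    fun qa _ qb _ h => by
      obtain ⟨h1, h2⟩ := List.append_inj' h rfl
      exact Prod.ext h1 (List.singleton_inj.mp h2)
  calc ∑ q ∈ Q, (q.map p).prod * ∑ a, p a * g (q ++ [a]) + g []
      = ∑ qa ∈ Q ×ˢ univ, ((qa.1 ++ [qa.2]).map p).prod * g (qa.1 ++ [qa.2]) +
          (([] : List A).map p).prod * g [] := by
        simp only [sum_product, mul_sum, List.map_append, List.prod_append, List.map_cons,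
          List.map_nil, List.prod_cons, List.prod_nil, mul_one, one_mul, mul_assoc]
    _ = ∑ r ∈ Q ∪ X, (r.map p).prod * g r := by
        rw [← sum_image (f := fun r => (r.map p).prod * g r) hinj, hT.image_append_singleton,
          sum_erase_add _ _ (mem_union_left X hT.nil_mem)]
    _ = ∑ q ∈ Q, (q.map p).prod * g q + ∑ x ∈ X, (x.map p).prod * g x :=
        sum_union hT.disjoint

theorem sum_prod_map_eq_one (hT : IsCompletePrefixTree X Q) (hsum : ∑ a, p a = 1) :
    ∑ x ∈ X, (x.map p).prod = 1 := by
  have := hT.sum_children p 1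
  simp only [Pi.one_apply, mul_one, hsum] at this
  linarith

theorem sum_length_mul_prod_map (hT : IsCompletePrefixTree X Q) (hsum : ∑ a, p a = 1) :
    ∑ x ∈ X, (x.length : ℝ) * (x.map p).prod = ∑ q ∈ Q, (q.map p).prod := by
  have := hT.sum_children p fun u => (u.length : ℝ)
  simp only [List.length_append, List.length_singleton, Nat.cast_add, Nat.cast_one, mul_add,
    sum_add_distrib, ← sum_mul, hsum, one_mul, mul_one, List.length_nil, Nat.cast_zero,
    add_zero] at this
  simp only [mul_comm (Nat.cast _ : ℝ)]
  linarith

end IsCompletePrefixTree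

theorem IsCompletePrefixTree.of_finite {X : Set (List A)} (hX : X.Finite) (hcode : IsPrefixCode X)
    (hne : X.Nonempty) (hcompl : ∀ u, ∃ v, u ++ v ∈ star X) :
    IsCompletePrefixTree hX.toFinset (properPrefixes_finite hX).toFinset where
  coe_eq := by simp
  isPrefixCode := by simpa using hcode
  nonempty := by simpa using hne
  append_mem q hq a := by
    simpa using append_singleton_mem_properPrefixes_union hcode hcompl (by simpa using hq) a

end Tree

section PrefixWeight

variable {A σ : Type*} [DecidableEq σ] {p : A → ℝ} {δ : σ → A → σ} {q₀ : σ}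
  {Q : Finset (List A)}

variable (p δ q₀ Q) in
def prefixWeight (q : σ) : ℝ :=
  ∑ r ∈ Q with r.foldl δ q₀ = q, (r.map p).prod

theorem sum_prefixWeight_mul [Fintype σ] (g : σ → ℝ) :
    ∑ q, prefixWeight p δ q₀ Q q * g q = ∑ r ∈ Q, (r.map p).prod * g (r.foldl δ q₀) := by
  rw [← sum_fiberwise Q (fun r => r.foldl δ q₀)]
  refine sum_congr rfl fun q _ => ?_
  rw [prefixWeight, sum_mul]
  exact sum_congr rfl fun r hr => by rw [(mem_filter.mp hr).2]

theorem prefixWeight_nonneg (hp : ∀ a, 0 ≤ p a) (q : σ) : 0 ≤ prefixWeight p δ q₀ Q q :=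
  sum_nonneg fun r _ => prod_map_nonneg hp r

theorem prefixWeight_pos (hp : ∀ a, 0 ≤ p a) (hQ : [] ∈ Q) :
    0 < prefixWeight p δ q₀ Q q₀ := by
  refine one_pos.trans_le ?_
  simpa [prefixWeight] using single_le_sum (f := fun r : List A => (r.map p).prod)
    (fun r _ => prod_map_nonneg hp r)
    (mem_filter.mpr ⟨hQ, rfl⟩ : [] ∈ Q.filter fun r => r.foldl δ q₀ = q₀)

theorem sum_prefixWeight [Fintype σ] :
    ∑ q, prefixWeight p δ q₀ Q q = ∑ r ∈ Q, (r.map p).prod :=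
  sum_fiberwise Q _ _

theorem sum_filter_prefixWeight [Fintype σ] (t : σ → Prop) [DecidablePred t] :
    ∑ q with t q, prefixWeight p δ q₀ Q q = ∑ r ∈ Q with t (r.foldl δ q₀), (r.map p).prod := by
  simpa [sum_filter, mul_ite] using sum_prefixWeight_mul (p := p) (δ := δ) (q₀ := q₀) (Q := Q)
    fun q => if t q then 1 else 0

/-- Stationarity is the tree summation `sum_children` for `g (r.foldl δ q₀)`. -/
theorem isStationary_prefixWeight [Fintype A] [Fintype σ] {X : Finset (List A)}
    (hT : IsCompletePrefixTree X Q) (hsum : ∑ a, p a = 1) (hX : ∀ x ∈ X, x.foldl δ q₀ = q₀) :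
    IsStationary p δ (prefixWeight p δ q₀ Q) := fun g => by
  have hleaves : ∑ x ∈ X, (x.map p).prod * g (x.foldl δ q₀) = g q₀ := by
    rw [sum_congr rfl fun x hx => by rw [hX x hx], ← sum_mul, hT.sum_prod_map_eq_one p hsum,
      one_mul]
  have := hT.sum_children p fun u => g (u.foldl δ q₀)
  rw [hleaves] at this
  simp only [List.foldl_append, List.foldl_cons, List.foldl_nil] at this
  rw [sum_prefixWeight_mul, sum_prefixWeight_mul]
  linarith

end PrefixWeight

section MinimalAutomaton

variable {A : Type*} {S : Set (List A)}

theorem LangDense.nonempty (hdense : LangDense S) : S.Nonempty :=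
  let ⟨_, _, h⟩ := hdense []
  ⟨_, h⟩

theorem leftQuot_append (S : Set (List A)) (u v : List A) :
    leftQuot S (u ++ v) = leftQuot (leftQuot S u) v := by
  ext t
  simp [leftQuot, List.append_assoc]

variable (S) in
/-- The transitions of the minimal automaton of `S`, extended to all left quotients of `S`
(the empty one included). -/
def quotStep (q : Set.range (leftQuot S)) (a : A) : Set.range (leftQuot S) :=
  ⟨leftQuot q [a], by
    obtain ⟨u, hu⟩ := q.2
    exact ⟨u ++ [a], by rw [leftQuot_append, hu]⟩⟩

variable (S) in
def initialQuot : Set.range (leftQuot S) := ⟨S, [], rfl⟩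

theorem coe_foldl_quotStep (u : List A) (q : Set.range (leftQuot S)) :
    (u.foldl (quotStep S) q).val = leftQuot q u := by
  induction u generalizing q with
  | nil => rfl
  | cons a u ih =>
    rw [List.foldl_cons, ih, quotStep, ← leftQuot_append]
    rfl

theorem foldl_quotStep_mk (u y : List A) :
    u.foldl (quotStep S) ⟨leftQuot S y, y, rfl⟩ = ⟨leftQuot S (y ++ u), y ++ u, rfl⟩ :=
  Subtype.ext ((coe_foldl_quotStep u _).trans (leftQuot_append S y u).symm)

/-- Otherwise, by recurrence, a single word would lead every state to the empty quotient,
against density. -/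
theorem leftQuot_nonempty (hdense : LangDense S) (hrec : Recurrent S) (u₀ : List A) :
    (leftQuot S u₀).Nonempty := by
  by_contra h
  rw [Set.not_nonempty_iff_eq_empty] at h
  have := hrec.1.to_subtype
  obtain ⟨s, hs⟩ := hdense.nonempty
  let dead : Set.range (leftQuot S) := ⟨∅, u₀, h⟩
  have hreach : ∀ q, ∃ u : List A, u.foldl (quotStep S) q = dead := by
    rintro ⟨_, y, rfl⟩
    by_cases hy : (leftQuot S y).Nonempty
    · obtain ⟨t, ht⟩ := hrec.2 y [] hy ⟨s, hs⟩
      refine ⟨t ++ u₀, Subtype.ext ?_⟩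
      rw [foldl_quotStep_mk]
      change leftQuot S (y ++ (t ++ u₀)) = ∅
      rw [← List.append_assoc, leftQuot_append S (y ++ t), ht]
      exact h
    · exact ⟨[], Subtype.ext (Set.not_nonempty_iff_eq_empty.mp hy)⟩
  obtain ⟨u, hu⟩ := exists_foldl_eq_of_absorbing (δ := quotStep S)
    (fun a => Subtype.ext (by ext; simp [quotStep, dead, leftQuot])) hreach
  obtain ⟨x, y, hxy⟩ := hdense u
  have hdead : leftQuot S (x ++ u) = ∅ := by
    simpa [foldl_quotStep_mk, dead] using congrArg Subtype.val (hu ⟨leftQuot S x, x, rfl⟩)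
  have hy : y ∈ leftQuot S (x ++ u) := hxy
  rwa [hdead] at hy

theorem exists_foldl_quotStep_eq (hrec : Recurrent S) (hcomp : ∀ u, (leftQuot S u).Nonempty)
    (q q' : Set.range (leftQuot S)) : ∃ u : List A, u.foldl (quotStep S) q = q' := by
  obtain ⟨_, y, rfl⟩ := q
  obtain ⟨_, y', rfl⟩ := q'
  obtain ⟨u, hu⟩ := hrec.2 y y' (hcomp y) (hcomp y')
  exact ⟨u, by rw [foldl_quotStep_mk]; exact Subtype.ext hu⟩

theorem mem_minStates (hcomp : ∀ u, (leftQuot S u).Nonempty) (q : Set.range (leftQuot S)) :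
    q.val ∈ MinStates S := by
  obtain ⟨_, y, rfl⟩ := q
  exact ⟨hcomp y, y, rfl⟩

section Rank

variable [Fintype (Set.range (leftQuot S))] [DecidableEq (Set.range (leftQuot S))]

theorem mrank_eq_card_imageBy (hcomp : ∀ u, (leftQuot S u).Nonempty) (w : List A) :
    mrank S w = (imageBy (quotStep S) w).card := by
  have : {T | T.Nonempty ∧ ∃ u, T = leftQuot S (u ++ w)} =
      Subtype.val '' (imageBy (quotStep S) w : Set (Set.range (leftQuot S))) := by
    ext T
    simp only [imageBy, coe_image, coe_univ, Set.image_univ, ← Set.range_comp,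
      Set.mem_ofPred_eq, Set.mem_range, Function.comp_apply, Subtype.exists]
    constructor
    · rintro ⟨-, u, rfl⟩
      exact ⟨_, ⟨u, rfl⟩, by rw [foldl_quotStep_mk]⟩
    · rintro ⟨_, ⟨u, rfl⟩, rfl⟩
      rw [foldl_quotStep_mk]
      exact ⟨hcomp _, u, rfl⟩
  rw [mrank, this, Set.ncard_image_of_injective _ Subtype.val_injective, Set.ncard_coe_finset]

theorem IsMinNonzeroMrank.isMinImage {w : List A} (hw : IsMinNonzeroMrank S w)
    (hcomp : ∀ u, (leftQuot S u).Nonempty) :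
    IsMinImage (quotStep S) (imageBy (quotStep S) w) := by
  refine ⟨w, rfl, fun v => ?_⟩
  rw [← mrank_eq_card_imageBy hcomp, ← mrank_eq_card_imageBy hcomp]
  refine hw.2 v ?_
  rw [mrank_eq_card_imageBy hcomp]
  exact ((univ_nonempty_iff.mpr ⟨initialQuot S⟩).image _).card_pos.ne'

theorem ncard_terminalStates_image_eq
    [DecidablePred fun q : Set.range (leftQuot S) => [] ∈ q.val]
    (hcomp : ∀ u, (leftQuot S u).Nonempty) (w : List A) :
    {T | ∃ q ∈ TerminalStates S, T = leftQuot q w}.ncard =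
      ((univ.filter fun q : Set.range (leftQuot S) => [] ∈ q.val).image
        fun q => w.foldl (quotStep S) q).card := by
  have : {T | ∃ q ∈ TerminalStates S, T = leftQuot q w} =
      Subtype.val '' (((univ.filter fun q : Set.range (leftQuot S) => [] ∈ q.val).image
        fun q => w.foldl (quotStep S) q : Finset _) : Set (Set.range (leftQuot S))) := by
    ext T
    constructor
    · rintro ⟨_, ⟨⟨-, y, rfl⟩, hy⟩, rfl⟩
      exact ⟨_, mem_image_of_mem _ (mem_filter.mpr ⟨mem_univ ⟨leftQuot S y, y, rfl⟩, hy⟩),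
        coe_foldl_quotStep w _⟩
    · rintro ⟨_, hT, rfl⟩
      obtain ⟨q, hq, rfl⟩ := mem_image.mp hT
      exact ⟨q.val, ⟨mem_minStates hcomp q, (mem_filter.mp hq).2⟩, coe_foldl_quotStep w q⟩
  rw [this, Set.ncard_image_of_injective _ Subtype.val_injective, Set.ncard_coe_finset]

theorem card_image_terminal_ne_zero
    [DecidablePred fun q : Set.range (leftQuot S) => [] ∈ q.val] (hS : S.Nonempty)
    (w : List A) :
    ((univ.filter fun q : Set.range (leftQuot S) => [] ∈ q.val).image
      fun q => w.foldl (quotStep S) q).card ≠ 0 := by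
  obtain ⟨s, hs⟩ := hS
  refine (card_pos.mpr (Finset.Nonempty.image ?_ _)).ne'
  exact ⟨⟨leftQuot S s, s, rfl⟩, mem_filter.mpr ⟨mem_univ _, by simpa [leftQuot] using hs⟩⟩

end Rank


end MinimalAutomaton

section LeftRoot

variable {A : Type*} {S : Set (List A)}

theorem isPrefixCode_leftRoot (S : Set (List A)) : IsPrefixCode (leftRoot S) := by
  refine ⟨fun h => h.2.1 rfl, fun x hx y hy hxy => ?_⟩
  obtain ⟨t, rfl⟩ := hxy
  by_contra hne
  have ht : t ≠ [] := by rintro rfl; simp at hne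
  have hxt : leftQuot S (x ++ t) = S := hy.1
  rw [leftQuot_append, show leftQuot S x = S from hx.1] at hxt
  exact hy.2.2 ⟨x, t, hx.1, hxt, hx.2.1, ht, rfl⟩

theorem subset_setMul_star_properPrefixes {P : Set (List A)}
    (hP : P = {q | q ∈ S ∧ q ∈ properPrefixes (leftRoot S)})
    (hSP : S = setMul (star (leftRoot S)) P) :
    S ⊆ setMul (star (leftRoot S)) (properPrefixes (leftRoot S)) := fun u hu => by
  rw [hSP] at hu
  obtain ⟨m, hm, q, hq, rfl⟩ := hu
  exact ⟨m, hm, q, (hP ▸ hq).2, rfl⟩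

theorem foldl_quotStep_initialQuot_of_mem_stab {x : List A} (hx : x ∈ stab S) :
    x.foldl (quotStep S) (initialQuot S) = initialQuot S :=
  Subtype.ext ((coe_foldl_quotStep x _).trans hx)

theorem nil_mem_foldl_initialQuot (u : List A) :
    [] ∈ (u.foldl (quotStep S) (initialQuot S)).val ↔ u ∈ S := by
  rw [coe_foldl_quotStep]
  simp [initialQuot, leftQuot]

theorem SaturatedBy.iff_of_foldl_eq {w : List A} (hsat : SaturatedBy S w)
    (hcomp : ∀ u, (leftQuot S u).Nonempty) {q q' : Set.range (leftQuot S)}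
    (h : w.foldl (quotStep S) q = w.foldl (quotStep S) q') : [] ∈ q.val ↔ [] ∈ q'.val := by
  have hne : ∀ r : Set.range (leftQuot S), (leftQuot r.val w).Nonempty := fun r => by
    rw [← coe_foldl_quotStep]; exact (mem_minStates hcomp _).1
  exact hsat.2 _ _ (mem_minStates hcomp q) (mem_minStates hcomp q') (hne q) (hne q')
    (by rw [← coe_foldl_quotStep, ← coe_foldl_quotStep, h])

end LeftRoot

end Birec

open Birec

/-- **Corollary.** Let `S = X*P` be a dense birecurrent set of finite type with left
root `X` and associated set `P` of proper prefixes of `X` (those lying in `S`).  Then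
for any positive Bernoulli distribution `π`, the average length of `X` satisfies
`λ(X) = i(S) · π(P)`, where the index `i(S) = d/k` is computed from any word `w` of
minimal nonzero rank `d` saturating the terminal states, `k` being the number of classes
of the kernel of `w` whose union is the terminal set. -/
theorem average_length_eq_index_mul {A : Type*} [Fintype A] (S P : Set (List A))
    (hdense : LangDense S) (hbi : Birecurrent S) (hft : FiniteType S)
    (hP : P = {q | q ∈ S ∧ q ∈ properPrefixes (leftRoot S)})
    (hSP : S = setMul (star (leftRoot S)) P)
    (w : List A) (hw : IsMinNonzeroMrank S w) (hsat : SaturatedBy S w)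
    (p : A → ℝ) (hp : ∀ a, 0 < p a) (hsum : ∑ a, p a = 1) :
    ∑' x : (leftRoot S), ((x : List A).length : ℝ) * ((x : List A).map p).prod =
      ((mrank S w : ℝ) /
          ({T : Set (List A) | ∃ q ∈ TerminalStates S, T = leftQuot q w}.ncard : ℝ)) *
        ∑' q : P, ((q : List A).map p).prod := by
  classical
  obtain ⟨hrec, -⟩ := hbi
  have hcomp := leftQuot_nonempty hdense hrec
  have := hrec.1.fintype
  have hSX := subset_setMul_star_properPrefixes hP hSP
  have hT := IsCompletePrefixTree.of_finite hft.1 (isPrefixCode_leftRoot S)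
    (nonempty_of_subset_setMul hSX hdense.nonempty) (exists_append_mem_star_of_subset hSX hcomp)
  have hp0 : ∀ a, 0 ≤ p a := fun a => (hp a).le
  have hconn := exists_foldl_quotStep_eq hrec hcomp
  have hV := isStationary_prefixWeight (δ := quotStep S) (q₀ := initialQuot S) hT hsum
    fun x hx => foldl_quotStep_initialQuot_of_mem_stab (hft.1.mem_toFinset.mp hx).1
  have key := hV.sum_filter_mul_card_imageBy
    (hV.pos hp hconn (prefixWeight_nonneg hp0) (prefixWeight_pos hp0 hT.nil_mem))
    hp hsum hconn (hw.isMinImage hcomp) fun q q' h => hsat.iff_of_foldl_eq hcomp h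
  rw [sum_prefixWeight, sum_filter_prefixWeight] at key
  simp only [nil_mem_foldl_initialQuot] at key
  have hPQ : ((properPrefixes_finite hft.1).toFinset.filter (· ∈ S) : Set (List A)) = P := by
    ext r
    simp [hP, and_comm]
  rw [tsum_subtype_eq_sum hft.1.coe_toFinset fun x => (x.length : ℝ) * (x.map p).prod,
    hT.sum_length_mul_prod_map p hsum, tsum_subtype_eq_sum hPQ fun x => (x.map p).prod,
    mrank_eq_card_imageBy hcomp, ncard_terminalStates_image_eq hcomp, div_mul_eq_mul_div,
    eq_div_iff (Nat.cast_ne_zero.mpr (card_image_terminal_ne_zero hdense.nonempty w))]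
  linear_combination -key
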